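/- arXiv:2007.09457 — 6 statements merged into one kernel-verified Lean document; each statement's English description precedes it below -/
import Mathlib

section
/- Let m, n, r, s be positive integers with r ≤ min(m,n) and s ≤ mn, and let μ ≥ 1. If L ∈ ℝ^{m×n} is a μ-incoherent matrix of rank at most r and S ∈ ℝ^{m×n} has at most s nonzero entries, then |⟨L,S⟩| ≤ μ · (r√s / √(mn)) · ‖L‖_F · ‖S‖_F. -/
open scoped BigOperators
open Matrix

noncomputable section

def mInner {m n : ℕ} (A B : Matrix (Fin m) (Fin n) ℝ) : ℝ := ∑ i, ∑ j, A i j * B i j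

def frobSq {m n : ℕ} (A : Matrix (Fin m) (Fin n) ℝ) : ℝ := ∑ i, ∑ j, (A i j) ^ 2

def frobNorm {m n : ℕ} (A : Matrix (Fin m) (Fin n) ℝ) : ℝ := Real.sqrt (frobSq A)

def vInner {p : ℕ} (u v : Fin p → ℝ) : ℝ := ∑ i, u i * v i

def vNormSq {p : ℕ} (v : Fin p → ℝ) : ℝ := ∑ i, (v i) ^ 2

def vNorm {p : ℕ} (v : Fin p → ℝ) : ℝ := Real.sqrt (vNormSq v)

/-- Number of nonzero entries of a matrix. -/
def sparseCount {m n : ℕ} (S : Matrix (Fin m) (Fin n) ℝ) : ℕ :=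
  {q : Fin m × Fin n | S q.1 q.2 ≠ 0}.ncard

/-- `L` is `μ`-incoherent of rank at most `r`: `rank L ≤ r` and `L` admits a (truncated)
singular value decomposition `L = U * diagonal d * Vᵀ` with `U ∈ ℝ^{m×r}`, `V ∈ ℝ^{n×r}`
having orthonormal columns (the top `r` left/right singular vectors) whose rows satisfy
`‖Uᵀ eᵢ‖₂ ≤ √(μ r / m)` and `‖Vᵀ fⱼ‖₂ ≤ √(μ r / n)`. -/
def Incoherent {m n : ℕ} (μ : ℝ) (r : ℕ) (L : Matrix (Fin m) (Fin n) ℝ) : Prop :=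
  L.rank ≤ r ∧
  ∃ (U : Matrix (Fin m) (Fin r) ℝ) (d : Fin r → ℝ) (V : Matrix (Fin n) (Fin r) ℝ),
    Uᵀ * U = 1 ∧ Vᵀ * V = 1 ∧ (∀ k, 0 ≤ d k) ∧ L = U * Matrix.diagonal d * Vᵀ ∧
    (∀ i : Fin m, Real.sqrt (∑ k, (U i k) ^ 2) ≤ Real.sqrt (μ * r / m)) ∧
    (∀ j : Fin n, Real.sqrt (∑ k, (V j k) ^ 2) ≤ Real.sqrt (μ * r / n))

/-- The set of low-rank plus sparse matrices `LS_{m,n}(r,s,μ)`. -/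
def LS (m n r s : ℕ) (μ : ℝ) : Set (Matrix (Fin m) (Fin n) ℝ) :=
  {X | ∃ L S : Matrix (Fin m) (Fin n) ℝ,
      X = L + S ∧ Incoherent μ r L ∧ sparseCount S ≤ s}

/-! Write `L = U * diagonal d * Vᵀ`. Every singular value `d k` is at most `‖L‖_F`, so by
Cauchy–Schwarz each entry `L i j = ∑ k, U i k * d k * V j k` is at most
`‖Uᵀ eᵢ‖ ‖Vᵀ fⱼ‖ ‖L‖_F ≤ (μ r / √(m n)) ‖L‖_F` in absolute value. Hence `|⟨L, S⟩|` is at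
most that entry bound times `∑ |S i j|`, and Cauchy–Schwarz over the at most `s` nonzero
entries of `S` gives `∑ |S i j| ≤ √s ‖S‖_F`. -/

section Frobenius

variable {m n : ℕ}

theorem frobSq_eq_trace (A : Matrix (Fin m) (Fin n) ℝ) : frobSq A = (Aᵀ * A).trace := by
  simp only [frobSq, trace, diag, mul_apply, transpose_apply, sq]
  exact Finset.sum_comm

theorem frobNorm_nonneg (A : Matrix (Fin m) (Fin n) ℝ) : 0 ≤ frobNorm A :=
  Real.sqrt_nonneg _

variable {ι : Type*} [Fintype ι] [DecidableEq ι]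

theorem frobSq_mul_diagonal_mul_transpose {U : Matrix (Fin m) ι ℝ} {V : Matrix (Fin n) ι ℝ}
    (hU : Uᵀ * U = 1) (hV : Vᵀ * V = 1) (d : ι → ℝ) :
    frobSq (U * diagonal d * Vᵀ) = ∑ k, d k ^ 2 := by
  have hgram : (U * diagonal d * Vᵀ)ᵀ * (U * diagonal d * Vᵀ)
      = V * (diagonal d * diagonal d) * Vᵀ := by
    simp only [transpose_mul, transpose_transpose, diagonal_transpose, Matrix.mul_assoc]
    rw [← Matrix.mul_assoc Uᵀ, hU, Matrix.one_mul]
  rw [frobSq_eq_trace, hgram, trace_mul_cycle, ← Matrix.mul_assoc, hV, Matrix.one_mul,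
    diagonal_mul_diagonal, trace_diagonal]
  simp only [sq]

theorem abs_le_frobNorm_mul_diagonal_mul_transpose {U : Matrix (Fin m) ι ℝ}
    {V : Matrix (Fin n) ι ℝ} (hU : Uᵀ * U = 1) (hV : Vᵀ * V = 1) (d : ι → ℝ) (k : ι) :
    |d k| ≤ frobNorm (U * diagonal d * Vᵀ) := by
  rw [frobNorm, frobSq_mul_diagonal_mul_transpose hU hV]
  exact Real.abs_le_sqrt (Finset.single_le_sum (fun i _ => sq_nonneg (d i)) (Finset.mem_univ k))

theorem abs_mul_diagonal_mul_transpose_apply_le (U : Matrix (Fin m) ι ℝ)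
    (V : Matrix (Fin n) ι ℝ) {d : ι → ℝ} {b : ℝ} (hb : 0 ≤ b) (hd : ∀ k, |d k| ≤ b)
    (i : Fin m) (j : Fin n) :
    |(U * diagonal d * Vᵀ) i j| ≤ √(∑ k, U i k ^ 2) * √(∑ k, V j k ^ 2) * b := by
  calc |(U * diagonal d * Vᵀ) i j| = |∑ k, U i k * d k * V j k| := by
        simp [mul_apply, diagonal_apply]
    _ ≤ ∑ k, |U i k| * |V j k| * b := by
        refine (Finset.abs_sum_le_sum_abs _ _).trans (Finset.sum_le_sum fun k _ => ?_)
        rw [abs_mul, abs_mul, mul_right_comm]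
        gcongr
        exact hd k
    _ = (∑ k, |U i k| * |V j k|) * b := (Finset.sum_mul ..).symm
    _ ≤ √(∑ k, U i k ^ 2) * √(∑ k, V j k ^ 2) * b := by
        gcongr
        simpa only [sq_abs] using Real.sum_mul_le_sqrt_mul_sqrt _ (|U i ·|) (|V j ·|)

end Frobenius

section Sparse

variable {m n : ℕ}

theorem sum_abs_le_sqrt_sparseCount_mul_frobNorm (S : Matrix (Fin m) (Fin n) ℝ) :
    ∑ i, ∑ j, |S i j| ≤ √(sparseCount S) * frobNorm S := by
  classical
  set T := Finset.univ.filter fun q : Fin m × Fin n => S q.1 q.2 ≠ 0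
  have hcard : sparseCount S = T.card := by
    rw [sparseCount, Set.ncard_eq_toFinset_card', Set.toFinset_ofPred]
  have hsum : ∑ i, ∑ j, |S i j| = ∑ q ∈ T, |S q.1 q.2| := by
    rw [Finset.sum_filter_of_ne fun q _ h => abs_ne_zero.mp h, ← Fintype.sum_prod_type']
  have hsq : ∑ q ∈ T, |S q.1 q.2| ^ 2 ≤ frobSq S := by
    rw [frobSq, ← Fintype.sum_prod_type']
    simp only [sq_abs]
    exact Finset.sum_le_sum_of_subset_of_nonneg (Finset.subset_univ T) fun q _ _ => sq_nonneg _
  calc ∑ i, ∑ j, |S i j| ≤ √(T.card * ∑ q ∈ T, |S q.1 q.2| ^ 2) :=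
        hsum ▸ Real.le_sqrt_of_sq_le (sq_sum_le_card_mul_sum_sq ..)
    _ ≤ √(sparseCount S) * frobNorm S := by
        rw [hcard, frobNorm, ← Real.sqrt_mul (Nat.cast_nonneg _)]
        gcongr

theorem abs_mInner_le_mul_sum_abs {L S : Matrix (Fin m) (Fin n) ℝ} {a : ℝ}
    (hL : ∀ i j, |L i j| ≤ a) : |mInner L S| ≤ a * ∑ i, ∑ j, |S i j| := by
  calc |mInner L S| ≤ ∑ i, ∑ j, |L i j| * |S i j| := by
        refine (Finset.abs_sum_le_sum_abs _ _).trans (Finset.sum_le_sum fun i _ => ?_)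
        refine (Finset.abs_sum_le_sum_abs _ _).trans_eq (Finset.sum_congr rfl fun j _ => ?_)
        exact abs_mul _ _
    _ ≤ ∑ i, ∑ j, a * |S i j| := by gcongr; exact hL _ _
    _ = a * ∑ i, ∑ j, |S i j| := by simp only [Finset.mul_sum]

end Sparse

theorem Real.sqrt_div_mul_sqrt_div {c x y : ℝ} (hc : 0 ≤ c) (hx : 0 ≤ x) (hy : 0 ≤ y) :
    √(c / x) * √(c / y) = c / √(x * y) := by
  rw [← Real.sqrt_mul (by positivity), div_mul_div_comm, Real.sqrt_div' _ (by positivity),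
    ← sq, Real.sqrt_sq hc]

theorem incoherent_sparse_inner_bound_general
    (m n r s : ℕ) (μ : ℝ) (hμ : 1 ≤ μ)
    (L S : Matrix (Fin m) (Fin n) ℝ)
    (hL : Incoherent μ r L) (hS : sparseCount S ≤ s) :
    |mInner L S| ≤ μ * ((r : ℝ) * Real.sqrt s / Real.sqrt (m * n)) * frobNorm L * frobNorm S := by
  obtain ⟨-, U, d, V, hU, hV, -, hLUV, hUrow, hVrow⟩ := hL
  have hμr : 0 ≤ μ * r := by positivity
  have hentry : ∀ i j, |L i j| ≤ μ * r / √(m * n) * frobNorm L := fun i j =>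
    calc |L i j| ≤ √(∑ k, U i k ^ 2) * √(∑ k, V j k ^ 2) * frobNorm L := by
          rw [hLUV]
          exact abs_mul_diagonal_mul_transpose_apply_le U V (frobNorm_nonneg _)
            (abs_le_frobNorm_mul_diagonal_mul_transpose hU hV d) i j
      _ ≤ √(μ * r / m) * √(μ * r / n) * frobNorm L := by
          have := frobNorm_nonneg L
          gcongr ?_ * ?_ * _
          exacts [hUrow i, hVrow j]
      _ = μ * r / √(m * n) * frobNorm L := by
          rw [Real.sqrt_div_mul_sqrt_div hμr (Nat.cast_nonneg m) (Nat.cast_nonneg n)]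
  calc |mInner L S| ≤ μ * r / √(m * n) * frobNorm L * ∑ i, ∑ j, |S i j| :=
        abs_mInner_le_mul_sum_abs hentry
    _ ≤ μ * r / √(m * n) * frobNorm L * (√s * frobNorm S) := by
        refine mul_le_mul_of_nonneg_left ?_ (mul_nonneg (by positivity) (frobNorm_nonneg L))
        refine (sum_abs_le_sqrt_sparseCount_mul_frobNorm S).trans ?_
        gcongr
        exact frobNorm_nonneg S
    _ = _ := by ring

/-- rank-sparsity correlation bound for incoherent matrices. -/
theorem incoherent_sparse_inner_bound
    (m n r s : ℕ) (hm : 0 < m) (hn : 0 < n) (hr0 : 0 < r) (hs0 : 0 < s)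
    (hr : r ≤ min m n) (hs : s ≤ m * n) (μ : ℝ) (hμ : 1 ≤ μ)
    (L S : Matrix (Fin m) (Fin n) ℝ)
    (hL : Incoherent μ r L) (hS : sparseCount S ≤ s) :
    |mInner L S| ≤ μ * ((r : ℝ) * Real.sqrt s / Real.sqrt (m * n)) * frobNorm L * frobNorm S :=
  incoherent_sparse_inner_bound_general m n r s μ hμ L S hL hS
end
end

section
/- Let L, S ∈ ℝ^{m×n}, and let L = U Σ Vᵀ be a full singular value decomposition of L, where U ∈ ℝ^{m×m} and V ∈ ℝ^{n×n} are orthogonal matrices and Σ ∈ ℝ^{m×n} is diagonal with nonnegative entries. Then |⟨L,S⟩| ≤ ‖abs(U)·abs(Vᵀ)‖_∞ · σ_max(L) · ‖S‖₁, where abs(·) denotes the entrywise absolute value of a matrix, ‖M‖_∞ = max over entries of |M_{ij}|, ‖S‖₁ is the sum of the absolute values of the entries of S, and σ_max(L) is the largest singular value of L. -/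
open scoped BigOperators
open Matrix

noncomputable section

/-- for a full SVD `L = U Sig Vᵀ` (with `U`, `V` orthogonal and `Sig` a rectangular
diagonal matrix with nonnegative entries, so that the singular values of `L` are the diagonal
entries of `Sig` and `σ_max(L) = ⨆ i j, Sig i j`),
`|⟨L,S⟩| ≤ ‖abs(U)·abs(Vᵀ)‖_∞ · σ_max(L) · ‖S‖₁`, where the `(i,j)` entry of the product
`abs(U)·abs(Vᵀ)` is `∑ₖ |U i k| · |V j k|` (the shared index `k` running over `Fin (min m n)`),
`‖M‖_∞` is the largest absolute value of an entry, and `‖S‖₁` the sum of absolute values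
of the entries. -/
theorem inner_le_absUV_sigmaMax_l1
    (m n : ℕ) (L S : Matrix (Fin m) (Fin n) ℝ)
    (U : Matrix (Fin m) (Fin m) ℝ) (Sig : Matrix (Fin m) (Fin n) ℝ)
    (V : Matrix (Fin n) (Fin n) ℝ)
    (hU : Uᵀ * U = 1) (hV : Vᵀ * V = 1)
    (hdiag : ∀ (i : Fin m) (j : Fin n), (i : ℕ) ≠ (j : ℕ) → Sig i j = 0)
    (hnn : ∀ (i : Fin m) (j : Fin n), 0 ≤ Sig i j)
    (hL : L = U * Sig * Vᵀ) :
    |mInner L S| ≤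
      (⨆ i : Fin m, ⨆ j : Fin n,
          abs (∑ k : Fin (min m n),
              |U i (Fin.castLE (min_le_left m n) k)| * |V j (Fin.castLE (min_le_right m n) k)|))
        * (⨆ i : Fin m, ⨆ j : Fin n, Sig i j)
        * (∑ i : Fin m, ∑ j : Fin n, |S i j|) := by
  classical
  rcases Nat.eq_zero_or_pos m with hm | hm
  · subst hm; simp [mInner]
  rcases Nat.eq_zero_or_pos n with hn | hn
  · subst hn; simp [mInner]
  have : Nonempty (Fin m) := ⟨⟨0, hm⟩⟩
  have : Nonempty (Fin n) := ⟨⟨0, hn⟩⟩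
  set C := (⨆ i : Fin m, ⨆ j : Fin n,
          abs (∑ k : Fin (min m n),
              |U i (Fin.castLE (min_le_left m n) k)| * |V j (Fin.castLE (min_le_right m n) k)|)) with hCdef
  set σ := (⨆ i : Fin m, ⨆ j : Fin n, Sig i j) with hσdef
  have hσle : ∀ i j, Sig i j ≤ σ := by
    intro i j
    refine le_trans ?_ (le_ciSup (Set.Finite.bddAbove (Set.finite_range _)) i)
    exact le_ciSup (Set.Finite.bddAbove (Set.finite_range _)) j
  have hCle : ∀ (i : Fin m) (j : Fin n),
      abs (∑ k : Fin (min m n),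
          |U i (Fin.castLE (min_le_left m n) k)| * |V j (Fin.castLE (min_le_right m n) k)|) ≤ C := by
    intro i j
    calc abs (∑ k : Fin (min m n),
          |U i (Fin.castLE (min_le_left m n) k)| * |V j (Fin.castLE (min_le_right m n) k)|)
        ≤ ⨆ j : Fin n, abs (∑ k : Fin (min m n),
          |U i (Fin.castLE (min_le_left m n) k)| * |V j (Fin.castLE (min_le_right m n) k)|) :=
          le_ciSup (f := fun j : Fin n => abs (∑ k : Fin (min m n),
          |U i (Fin.castLE (min_le_left m n) k)| * |V j (Fin.castLE (min_le_right m n) k)|))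
          (Set.Finite.bddAbove (Set.finite_range _)) j
      _ ≤ C := le_ciSup (f := fun i : Fin m => ⨆ j : Fin n, abs (∑ k : Fin (min m n),
          |U i (Fin.castLE (min_le_left m n) k)| * |V j (Fin.castLE (min_le_right m n) k)|))
          (Set.Finite.bddAbove (Set.finite_range _)) i
  have hσ0 : 0 ≤ σ := le_trans (hnn ⟨0, hm⟩ ⟨0, hn⟩) (hσle _ _)
  have hC0 : 0 ≤ C := le_trans (abs_nonneg _) (hCle ⟨0, hm⟩ ⟨0, hn⟩)
  -- key reindexing
  have key : ∀ (f : Fin m → ℝ) (g : Fin n → ℝ),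
      ∑ a : Fin m, ∑ b : Fin n, f a * Sig a b * g b
        = ∑ k : Fin (min m n),
            f (Fin.castLE (min_le_left m n) k)
              * Sig (Fin.castLE (min_le_left m n) k) (Fin.castLE (min_le_right m n) k)
              * g (Fin.castLE (min_le_right m n) k) := by
    intro f g
    set F : ℕ → ℝ := fun x =>
      if h : x < m ∧ x < n then f ⟨x, h.1⟩ * Sig ⟨x, h.1⟩ ⟨x, h.2⟩ * g ⟨x, h.2⟩ else 0 with hF
    have h1 : ∀ a : Fin m, ∑ b : Fin n, f a * Sig a b * g b = F (a : ℕ) := by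
      intro a
      by_cases h : (a : ℕ) < n
      · rw [Finset.sum_eq_single (⟨(a : ℕ), h⟩ : Fin n)]
        · simp [hF, a.isLt, h]
        · intro b _ hb
          have : (a : ℕ) ≠ (b : ℕ) := fun hab => hb (by ext; simp [← hab])
          rw [hdiag a b this, mul_zero, zero_mul]
        · simp
      · rw [Finset.sum_eq_zero, hF]
        · simp [h]
        · intro b _
          have : (a : ℕ) ≠ (b : ℕ) := by omega
          rw [hdiag a b this, mul_zero, zero_mul]
    calc ∑ a : Fin m, ∑ b : Fin n, f a * Sig a b * g b
        = ∑ a : Fin m, F (a : ℕ) := Finset.sum_congr rfl fun a _ => h1 a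
      _ = ∑ x ∈ Finset.range m, F x := (Fin.sum_univ_eq_sum_range F m)
      _ = ∑ x ∈ Finset.range (min m n), F x := by
          refine (Finset.sum_subset (Finset.range_subset_range.mpr (min_le_left m n)) ?_).symm
          intro x hx hx'
          simp only [Finset.mem_range] at hx hx'
          have : ¬ (x < m ∧ x < n) := by omega
          simp [hF, this]
      _ = ∑ k : Fin (min m n), F (k : ℕ) := (Fin.sum_univ_eq_sum_range F (min m n)).symm
      _ = _ := by
          refine Finset.sum_congr rfl fun k _ => ?_
          have h1 : (k : ℕ) < m := lt_of_lt_of_le k.isLt (min_le_left m n)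
          have h2 : (k : ℕ) < n := lt_of_lt_of_le k.isLt (min_le_right m n)
          simp [hF, h1, h2, Fin.castLE]
  -- entrywise bound on L
  have hLentry : ∀ (i : Fin m) (j : Fin n), |L i j| ≤ C * σ := by
    intro i j
    have hLij : L i j = ∑ a : Fin m, ∑ b : Fin n, U i a * Sig a b * V j b := by
      rw [hL]
      simp only [Matrix.mul_apply, Matrix.transpose_apply]
      rw [Finset.sum_comm]
      refine Finset.sum_congr rfl fun a _ => ?_
      rw [Finset.sum_mul]
    rw [hLij, key (U i) (V j)]
    calc |∑ k : Fin (min m n),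
            U i (Fin.castLE (min_le_left m n) k)
              * Sig (Fin.castLE (min_le_left m n) k) (Fin.castLE (min_le_right m n) k)
              * V j (Fin.castLE (min_le_right m n) k)|
        ≤ ∑ k : Fin (min m n),
            |U i (Fin.castLE (min_le_left m n) k)|
              * Sig (Fin.castLE (min_le_left m n) k) (Fin.castLE (min_le_right m n) k)
              * |V j (Fin.castLE (min_le_right m n) k)| := by
          refine (Finset.abs_sum_le_sum_abs _ _).trans (le_of_eq ?_)
          refine Finset.sum_congr rfl fun k _ => ?_
          rw [abs_mul, abs_mul, abs_of_nonneg (hnn _ _)]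
      _ ≤ ∑ k : Fin (min m n),
            |U i (Fin.castLE (min_le_left m n) k)| * σ
              * |V j (Fin.castLE (min_le_right m n) k)| := by
          refine Finset.sum_le_sum fun k _ => ?_
          exact mul_le_mul_of_nonneg_right
            (mul_le_mul_of_nonneg_left (hσle _ _) (abs_nonneg _)) (abs_nonneg _)
      _ = σ * ∑ k : Fin (min m n),
            |U i (Fin.castLE (min_le_left m n) k)| * |V j (Fin.castLE (min_le_right m n) k)| := by
          rw [Finset.mul_sum]; exact Finset.sum_congr rfl fun k _ => by ring
      _ ≤ σ * C := by
          refine mul_le_mul_of_nonneg_left ?_ hσ0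
          refine le_trans (le_abs_self _) (hCle i j)
      _ = C * σ := mul_comm _ _
  -- final
  calc |mInner L S|
      ≤ ∑ i : Fin m, ∑ j : Fin n, |L i j| * |S i j| := by
        refine (Finset.abs_sum_le_sum_abs _ _).trans ?_
        refine Finset.sum_le_sum fun i _ => (Finset.abs_sum_le_sum_abs _ _).trans ?_
        exact le_of_eq (Finset.sum_congr rfl fun j _ => abs_mul _ _)
    _ ≤ ∑ i : Fin m, ∑ j : Fin n, (C * σ) * |S i j| := by
        refine Finset.sum_le_sum fun i _ => Finset.sum_le_sum fun j _ => ?_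
        exact mul_le_mul_of_nonneg_right (hLentry i j) (abs_nonneg _)
    _ = C * σ * (∑ i : Fin m, ∑ j : Fin n, |S i j|) := by
        rw [Finset.mul_sum]
        exact Finset.sum_congr rfl fun i _ => (Finset.mul_sum _ _ _).symm
end
end

section
/- Let m, n, r, s be positive integers and let 1 ≤ μ < √(mn)/(r√s). Then the set LS_{m,n}(r,s,μ) is a closed subset of ℝ^{m×n} (with respect to the Frobenius norm topology). -/
open scoped BigOperators
open Matrix

noncomputable section

/-!
Write an incoherent `L` as `U * diagonal d * Vᵀ`. Each `d k` is `uₖᵀ L vₖ` for the columns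
`uₖ`, `vₖ` of `U`, `V`, so `d k ^ 2 ≤ ‖L‖²`, and Cauchy–Schwarz on
`L i j = ∑ k, U i k * d k * V j k` with the row bounds gives `L i j ^ 2 ≤ (μr/m)(μr/n) ‖L‖²`.
So any `s` entries of `L` carry at most the fraction `c = sμ²r²/(mn)` of `‖L‖²`, and `c < 1`
is exactly the hypothesis on `μ`. Hence for a fixed set `Ω` of at most `s` positions, erasing
the entries in `Ω` keeps at least `(1 - c) ‖L‖²`: a bound on the erased matrix bounds `d`,
while `U` and `V` are bounded by orthonormality. The map "factorize, then erase `Ω`" is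
therefore proper on the closed set of incoherent factors, so its image is closed, and `LS` is
the finite union over `Ω` of the preimages of these images.
-/

open Set

instance {ι κ : Type*} [Finite ι] [Finite κ] : LocallyCompactSpace (Matrix ι κ ℝ) :=
  inferInstanceAs (LocallyCompactSpace (ι → κ → ℝ))

theorem isClosed_image_of_isCompact_inter_preimage {X Y : Type*} [TopologicalSpace X]
    [TopologicalSpace Y] [T2Space Y] [CompactlyCoherentSpace Y] {s : Set X} {f : X → Y}
    (hf : Continuous f) (hK : ∀ K, IsCompact K → IsCompact (s ∩ f ⁻¹' K)) :
    IsClosed (f '' s) := by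
  have hproper : IsProperMap (f ∘ Subtype.val : s → Y) := by
    refine isProperMap_iff_isCompact_preimage.2
      ⟨hf.comp continuous_subtype_val, fun K hKc => ?_⟩
    rw [Subtype.isCompact_iff, preimage_comp, Subtype.image_preimage_coe]
    exact hK K hKc
  simpa [range_comp] using hproper.isClosed_range

theorem isCompact_matrix_setOf_mem_Icc {ι κ : Type*} [Finite ι] [Finite κ] (a b : ℝ) :
    IsCompact {A : Matrix ι κ ℝ | ∀ i j, A i j ∈ Icc a b} := by
  have h := isCompact_univ_pi fun (_ : ι) => isCompact_univ_pi fun (_ : κ) =>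
    isCompact_Icc (a := a) (b := b)
  simp only [Set.pi, mem_univ, true_implies, mem_ofPred_eq] at h
  exact h

theorem mInner_sq_le_frobSq_mul_frobSq {m n : ℕ} (A B : Matrix (Fin m) (Fin n) ℝ) :
    mInner A B ^ 2 ≤ frobSq A * frobSq B := by
  simpa only [mInner, frobSq, ← Finset.sum_product', Finset.univ_product_univ] using
    Finset.sum_mul_sq_le_sq_mul_sq Finset.univ (fun q : Fin m × Fin n => A q.1 q.2)
      (fun q => B q.1 q.2)

theorem frobSq_nonneg {m n : ℕ} (A : Matrix (Fin m) (Fin n) ℝ) : 0 ≤ frobSq A := by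
  unfold frobSq; positivity

theorem continuous_frobSq {m n : ℕ} : Continuous (frobSq : Matrix (Fin m) (Fin n) ℝ → ℝ) := by
  unfold frobSq; fun_prop

theorem frobSq_vecMulVec {m n : ℕ} (u : Fin m → ℝ) (v : Fin n → ℝ) :
    frobSq (vecMulVec u v) = (∑ i, u i ^ 2) * ∑ j, v j ^ 2 := by
  simp only [frobSq, vecMulVec_apply, mul_pow, Finset.sum_mul_sum]

section Orthonormal

variable {ι κ : Type*} [Fintype ι] [DecidableEq κ] {U : Matrix ι κ ℝ}

theorem sum_col_sq_eq_one_of_transpose_mul_self_eq_one (hU : Uᵀ * U = 1) (k : κ) :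
    ∑ i, U i k ^ 2 = 1 := by
  simpa [mul_apply, sq] using congrFun (congrFun hU k) k

theorem abs_le_one_of_transpose_mul_self_eq_one (hU : Uᵀ * U = 1) (i : ι) (k : κ) :
    |U i k| ≤ 1 := by
  rw [← sq_le_one_iff_abs_le_one, ← sum_col_sq_eq_one_of_transpose_mul_self_eq_one hU k]
  exact Finset.single_le_sum (f := fun i => U i k ^ 2) (fun _ _ => sq_nonneg _)
    (Finset.mem_univ i)

end Orthonormal

section Factors

variable {m n r : ℕ}

def svdProduct (θ : Matrix (Fin m) (Fin r) ℝ × (Fin r → ℝ) × Matrix (Fin n) (Fin r) ℝ) :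
    Matrix (Fin m) (Fin n) ℝ :=
  θ.1 * diagonal θ.2.1 * θ.2.2ᵀ

def incoherentFactors (m n r : ℕ) (μ : ℝ) :
    Set (Matrix (Fin m) (Fin r) ℝ × (Fin r → ℝ) × Matrix (Fin n) (Fin r) ℝ) :=
  {θ | θ.1ᵀ * θ.1 = 1 ∧ θ.2.2ᵀ * θ.2.2 = 1 ∧ (∀ k, 0 ≤ θ.2.1 k) ∧
    (∀ i : Fin m, Real.sqrt (∑ k, (θ.1 i k) ^ 2) ≤ Real.sqrt (μ * r / m)) ∧
    (∀ j : Fin n, Real.sqrt (∑ k, (θ.2.2 j k) ^ 2) ≤ Real.sqrt (μ * r / n))}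

theorem setOf_incoherent_eq_image_svdProduct (μ : ℝ) :
    {L : Matrix (Fin m) (Fin n) ℝ | Incoherent μ r L} =
      svdProduct '' incoherentFactors m n r μ := by
  ext L
  constructor
  · rintro ⟨-, U, d, V, hU, hV, hd, rfl, hrowU, hrowV⟩
    exact ⟨(U, d, V), ⟨hU, hV, hd, hrowU, hrowV⟩, rfl⟩
  · rintro ⟨⟨U, d, V⟩, ⟨hU, hV, hd, hrowU, hrowV⟩, rfl⟩
    refine ⟨?_, U, d, V, hU, hV, hd, rfl, hrowU, hrowV⟩
    calc (U * diagonal d * Vᵀ).rank ≤ (U * diagonal d).rank := rank_mul_le_left _ _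
      _ ≤ U.rank := rank_mul_le_left _ _
      _ ≤ r := by simpa using U.rank_le_width

theorem continuous_svdProduct :
    Continuous (svdProduct :
      Matrix (Fin m) (Fin r) ℝ × (Fin r → ℝ) × Matrix (Fin n) (Fin r) ℝ → _) :=
  (continuous_fst.matrix_mul (continuous_snd.fst.matrix_diagonal)).matrix_mul
    continuous_snd.snd.matrix_transpose

theorem isClosed_incoherentFactors (μ : ℝ) : IsClosed (incoherentFactors m n r μ) := by
  simp only [incoherentFactors, ofPred_and, ofPred_forall]
  refine .inter (isClosed_eq (by fun_prop) (by fun_prop)) <| .inter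
    (isClosed_eq (by fun_prop) (by fun_prop)) <| .inter ?_ <| .inter ?_ ?_ <;>
  exact isClosed_iInter fun _ => isClosed_le (by fun_prop) (by fun_prop)

end Factors

section Bounds

variable {m n r : ℕ} {U : Matrix (Fin m) (Fin r) ℝ} {V : Matrix (Fin n) (Fin r) ℝ}

theorem mInner_vecMulVec_col (U : Matrix (Fin m) (Fin r) ℝ) (V : Matrix (Fin n) (Fin r) ℝ)
    (L : Matrix (Fin m) (Fin n) ℝ) (k : Fin r) :
    mInner (vecMulVec (fun i => U i k) (fun j => V j k)) L = (Uᵀ * L * V) k k := by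
  simp only [mInner, vecMulVec_apply, mul_apply, transpose_apply, Finset.sum_mul]
  rw [Finset.sum_comm]
  exact Finset.sum_congr rfl fun i _ => Finset.sum_congr rfl fun j _ => by ring

theorem sq_le_frobSq_svdProduct (hU : Uᵀ * U = 1) (hV : Vᵀ * V = 1) (d : Fin r → ℝ)
    (k : Fin r) : d k ^ 2 ≤ frobSq (U * diagonal d * Vᵀ) := by
  set L := U * diagonal d * Vᵀ with hL
  set E := vecMulVec (fun i => U i k) (fun j => V j k)
  have hdiag : Uᵀ * L * V = diagonal d := by
    simp only [hL, ← Matrix.mul_assoc, hU, Matrix.one_mul]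
    rw [Matrix.mul_assoc, hV, Matrix.mul_one]
  have hE : frobSq E = 1 := by
    rw [frobSq_vecMulVec, sum_col_sq_eq_one_of_transpose_mul_self_eq_one hU,
      sum_col_sq_eq_one_of_transpose_mul_self_eq_one hV, one_mul]
  calc d k ^ 2 = mInner E L ^ 2 := by rw [mInner_vecMulVec_col, hdiag, diagonal_apply_eq]
    _ ≤ frobSq E * frobSq L := mInner_sq_le_frobSq_mul_frobSq E L
    _ = frobSq L := by rw [hE, one_mul]

theorem sq_svdProduct_apply_le (hU : Uᵀ * U = 1) (hV : Vᵀ * V = 1) (d : Fin r → ℝ)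
    (i : Fin m) (j : Fin n) :
    (U * diagonal d * Vᵀ) i j ^ 2 ≤
      (∑ k, U i k ^ 2) * (∑ k, V j k ^ 2) * frobSq (U * diagonal d * Vᵀ) := by
  have hentry : (U * diagonal d * Vᵀ) i j = ∑ k, U i k * (d k * V j k) := by
    rw [mul_apply]
    simp only [mul_diagonal, transpose_apply, mul_assoc]
  have hweights :
      ∑ k, (d k * V j k) ^ 2 ≤ (∑ k, V j k ^ 2) * frobSq (U * diagonal d * Vᵀ) := by
    rw [Finset.sum_mul]
    refine Finset.sum_le_sum fun k _ => ?_
    rw [mul_pow, mul_comm]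
    exact mul_le_mul_of_nonneg_left (sq_le_frobSq_svdProduct hU hV d k) (sq_nonneg _)
  calc (U * diagonal d * Vᵀ) i j ^ 2 ≤ (∑ k, U i k ^ 2) * ∑ k, (d k * V j k) ^ 2 :=
        hentry ▸ Finset.sum_mul_sq_le_sq_mul_sq _ _ _
    _ ≤ _ := by
        rw [mul_assoc]
        exact mul_le_mul_of_nonneg_left hweights (Finset.sum_nonneg fun _ _ => sq_nonneg _)

end Bounds

section Sparse

variable {m n r s : ℕ} {μ : ℝ}

theorem Incoherent.sq_apply_le (hμ : 0 ≤ μ) {L : Matrix (Fin m) (Fin n) ℝ}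
    (hL : Incoherent μ r L) (i : Fin m) (j : Fin n) :
    L i j ^ 2 ≤ μ * r / m * (μ * r / n) * frobSq L := by
  obtain ⟨-, U, d, V, hU, hV, -, rfl, hrowU, hrowV⟩ := hL
  have hUi := (Real.sqrt_le_sqrt_iff (by positivity)).1 (hrowU i)
  have hVj := (Real.sqrt_le_sqrt_iff (by positivity)).1 (hrowV j)
  calc _ ≤ (∑ k, U i k ^ 2) * (∑ k, V j k ^ 2) * frobSq (U * diagonal d * Vᵀ) :=
        sq_svdProduct_apply_le hU hV d i j
    _ ≤ _ := by
        have := frobSq_nonneg (U * diagonal d * Vᵀ)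
        gcongr

def eraseEntries (Ω : Finset (Fin m × Fin n)) (X : Matrix (Fin m) (Fin n) ℝ) :
    Matrix (Fin m) (Fin n) ℝ :=
  of fun i j => if (i, j) ∈ Ω then 0 else X i j

theorem continuous_eraseEntries (Ω : Finset (Fin m × Fin n)) : Continuous (eraseEntries Ω) := by
  refine continuous_pi fun i => continuous_pi fun j => ?_
  by_cases h : (i, j) ∈ Ω <;> simp only [eraseEntries, of_apply, h, if_true, if_false] <;>
    fun_prop

theorem eraseEntries_sub (Ω : Finset (Fin m × Fin n)) (X Y : Matrix (Fin m) (Fin n) ℝ) :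
    eraseEntries Ω (X - Y) = eraseEntries Ω X - eraseEntries Ω Y := by
  ext i j
  by_cases h : (i, j) ∈ Ω <;> simp [eraseEntries, h]

theorem eraseEntries_eq_zero_iff {Ω : Finset (Fin m × Fin n)} {S : Matrix (Fin m) (Fin n) ℝ} :
    eraseEntries Ω S = 0 ↔ ∀ q ∉ Ω, S q.1 q.2 = 0 := by
  simp [eraseEntries, ← Matrix.ext_iff]

theorem sparseCount_le_iff {S : Matrix (Fin m) (Fin n) ℝ} :
    sparseCount S ≤ s ↔ ∃ Ω : Finset (Fin m × Fin n), Ω.card ≤ s ∧ eraseEntries Ω S = 0 := by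
  classical
  have hsupp :
      sparseCount S = (Finset.univ.filter fun q : Fin m × Fin n => S q.1 q.2 ≠ 0).card := by
    rw [sparseCount, ← Set.ncard_coe_finset, Finset.coe_filter]; simp
  simp only [eraseEntries_eq_zero_iff, hsupp]
  constructor
  · exact fun h => ⟨_, h, fun q hq => by simpa using hq⟩
  · rintro ⟨Ω, hΩ, hzero⟩
    refine le_trans (Finset.card_le_card fun q hq => ?_) hΩ
    by_contra hqΩ
    simp_all

theorem frobSq_eq_sum_add_frobSq_eraseEntries (Ω : Finset (Fin m × Fin n))
    (X : Matrix (Fin m) (Fin n) ℝ) :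
    frobSq X = ∑ q ∈ Ω, X q.1 q.2 ^ 2 + frobSq (eraseEntries Ω X) := by
  have hpairs (Y : Matrix (Fin m) (Fin n) ℝ) : frobSq Y = ∑ q : Fin m × Fin n, Y q.1 q.2 ^ 2 :=
    (Fintype.sum_prod_type fun q => Y q.1 q.2 ^ 2).symm
  rw [hpairs, hpairs, ← Finset.sum_add_sum_compl Ω,
    ← Finset.sum_add_sum_compl Ω fun q => eraseEntries Ω X q.1 q.2 ^ 2]
  have hon : ∑ q ∈ Ω, eraseEntries Ω X q.1 q.2 ^ 2 = 0 :=
    Finset.sum_eq_zero fun q hq => by simp [eraseEntries, hq]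
  have hoff : ∑ q ∈ Ωᶜ, eraseEntries Ω X q.1 q.2 ^ 2 = ∑ q ∈ Ωᶜ, X q.1 q.2 ^ 2 :=
    Finset.sum_congr rfl fun q hq => by simp [eraseEntries, Finset.mem_compl.1 hq]
  rw [hon, hoff, zero_add]

end Sparse

section Closed

variable {m n r s : ℕ} {μ : ℝ}

theorem Incoherent.mul_frobSq_le_frobSq_eraseEntries (hμ : 0 ≤ μ)
    {L : Matrix (Fin m) (Fin n) ℝ} (hL : Incoherent μ r L) {Ω : Finset (Fin m × Fin n)}
    (hΩ : Ω.card ≤ s) :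
    (1 - s * μ ^ 2 * r ^ 2 / (m * n)) * frobSq L ≤ frobSq (eraseEntries Ω L) := by
  have hL0 := frobSq_nonneg L
  have hon : ∑ q ∈ Ω, L q.1 q.2 ^ 2 ≤ s * μ ^ 2 * r ^ 2 / (m * n) * frobSq L :=
    calc ∑ q ∈ Ω, L q.1 q.2 ^ 2 ≤ Ω.card • (μ * r / m * (μ * r / n) * frobSq L) :=
          Finset.sum_le_card_nsmul _ _ _ fun q _ => hL.sq_apply_le hμ q.1 q.2
      _ ≤ s * (μ * r / m * (μ * r / n) * frobSq L) := by
          rw [nsmul_eq_mul]; gcongr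
      _ = s * μ ^ 2 * r ^ 2 / (m * n) * frobSq L := by ring
  linarith [frobSq_eq_sum_add_frobSq_eraseEntries Ω L]

theorem incoherence_sparsity_lt_one (hμ0 : 0 ≤ μ)
    (hμ : μ < Real.sqrt (m * n) / ((r : ℝ) * Real.sqrt s)) :
    (s : ℝ) * μ ^ 2 * r ^ 2 / (m * n) < 1 := by
  rcases (show 0 ≤ (r : ℝ) * Real.sqrt s by positivity).eq_or_lt with h | h
  · rw [← h, div_zero] at hμ
    linarith
  · have hlt := (lt_div_iff₀ h).1 hμ
    have hmn : 0 < (m : ℝ) * n := Real.sqrt_pos.1 (lt_of_le_of_lt (by positivity) hlt)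
    have hsq := pow_lt_pow_left₀ hlt (by positivity) two_ne_zero
    rw [mul_pow, mul_pow, Real.sq_sqrt hmn.le, Real.sq_sqrt (by positivity)] at hsq
    rw [div_lt_one hmn]
    linarith

theorem isClosed_image_eraseEntries_setOf_incoherent (hμ : 0 ≤ μ)
    (hc : (s : ℝ) * μ ^ 2 * r ^ 2 / (m * n) < 1) {Ω : Finset (Fin m × Fin n)}
    (hΩ : Ω.card ≤ s) :
    IsClosed (eraseEntries Ω '' {L | Incoherent μ r L}) := by
  have hcont := (continuous_eraseEntries Ω).comp (continuous_svdProduct (r := r))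
  rw [setOf_incoherent_eq_image_svdProduct, ← image_comp]
  refine isClosed_image_of_isCompact_inter_preimage hcont fun K hK => ?_
  obtain ⟨C, hC⟩ := hK.bddAbove_image continuous_frobSq.continuousOn
  set B := C / (1 - s * μ ^ 2 * r ^ 2 / (m * n))
  refine ((isCompact_matrix_setOf_mem_Icc (-1) 1).prod
    ((isCompact_Icc (a := 0) (b := fun _ => Real.sqrt B)).prod
      (isCompact_matrix_setOf_mem_Icc (-1) 1))).of_isClosed_subset
    ((isClosed_incoherentFactors μ).inter (hK.isClosed.preimage hcont)) ?_
  rintro ⟨U, d, V⟩ ⟨hθ, hθK⟩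
  obtain ⟨hU, hV, hd, -⟩ := id hθ
  have hL : svdProduct (U, d, V) ∈ {L | Incoherent μ r L} := by
    rw [setOf_incoherent_eq_image_svdProduct]
    exact mem_image_of_mem _ hθ
  have hLB : frobSq (U * diagonal d * Vᵀ) ≤ B := by
    rw [le_div_iff₀ (by linarith), mul_comm]
    exact (Incoherent.mul_frobSq_le_frobSq_eraseEntries hμ hL hΩ).trans
      (hC (mem_image_of_mem _ hθK))
  exact ⟨fun i k => abs_le.1 (abs_le_one_of_transpose_mul_self_eq_one hU i k),
    ⟨hd, fun k =>
      le_of_abs_le (Real.abs_le_sqrt ((sq_le_frobSq_svdProduct hU hV d k).trans hLB))⟩,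
    fun j k => abs_le.1 (abs_le_one_of_transpose_mul_self_eq_one hV j k)⟩

theorem LS_eq_biUnion :
    LS m n r s μ = ⋃ Ω ∈ {Ω : Finset (Fin m × Fin n) | Ω.card ≤ s},
      eraseEntries Ω ⁻¹' (eraseEntries Ω '' {L | Incoherent μ r L}) := by
  ext X
  simp only [LS, mem_iUnion, mem_preimage, mem_image, mem_ofPred_eq, exists_prop]
  constructor
  · rintro ⟨L, S, rfl, hL, hS⟩
    obtain ⟨Ω, hΩ, hzero⟩ := sparseCount_le_iff.1 hS
    refine ⟨Ω, hΩ, L, hL, ?_⟩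
    rw [eq_comm, ← sub_eq_zero, ← eraseEntries_sub, add_sub_cancel_left, hzero]
  · rintro ⟨Ω, hΩ, L, hL, hXL⟩
    refine ⟨L, X - L, (add_sub_cancel L X).symm, hL, sparseCount_le_iff.2 ⟨Ω, hΩ, ?_⟩⟩
    rw [eraseEntries_sub, hXL, sub_self]

end Closed

theorem LS_isClosed_general
    (m n r s : ℕ)
    (μ : ℝ) (hμ1 : 1 ≤ μ) (hμ : μ < Real.sqrt (m * n) / ((r : ℝ) * Real.sqrt s)) :
    IsClosed (LS m n r s μ) := by
  have hμ0 : 0 ≤ μ := zero_le_one.trans hμ1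
  rw [LS_eq_biUnion]
  refine (toFinite _).isClosed_biUnion fun Ω hΩ => ?_
  have hc := incoherence_sparsity_lt_one hμ0 hμ
  exact (isClosed_image_eraseEntries_setOf_incoherent hμ0 hc hΩ).preimage
    (continuous_eraseEntries Ω)

/-- `LS_{m,n}(r,s,μ)` is a closed subset of `ℝ^{m×n}` when
`1 ≤ μ < √(mn)/(r√s)`. -/
theorem LS_isClosed
    (m n r s : ℕ) (hm : 0 < m) (hn : 0 < n) (hr : 0 < r) (hs : 0 < s)
    (μ : ℝ) (hμ1 : 1 ≤ μ) (hμ : μ < Real.sqrt (m * n) / ((r : ℝ) * Real.sqrt s)) :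
    IsClosed (LS m n r s μ) :=
  LS_isClosed_general m n r s μ hμ1 hμ
end
end

section
/- Let 𝒜 : ℝ^{m×n} → ℝ^p be a linear map, let r, s ≥ 1 be integers, let 1 ≤ μ < √(mn)/(r√s), and set τ := (1 − μ²r²s/(mn))^{−1/2}. Let V₁, V₂ ⊆ ℝ^m and W₁, W₂ ⊆ ℝ^n be subspaces of dimension at most r, and let T ⊆ [m]×[n] with |T| ≤ s, such that Σ₁ = Σ_{m,n}(V₁,W₁,T,μ) and Σ₂ = Σ_{m,n}(V₂,W₂,T,μ) are defined (i.e. the incoherence conditions ‖P_{V_i} e_k‖₂ ≤ √(μr/m) and ‖P_{W_i} f_k‖₂ ≤ √(μr/n) hold). Suppose that for some Δ̄ > 0, every X ∈ Σ₁ satisfies (1−Δ̄)‖X‖_F ≤ ‖𝒜(X)‖₂ ≤ (1+Δ̄)‖X‖_F. Then every Y ∈ Σ₂ satisfies (1−Δ̄')‖Y‖_F ≤ ‖𝒜(Y)‖₂ ≤ (1+Δ̄')‖Y‖_F, where Δ̄' = Δ̄ + τ·ρ((V₁,W₁),(V₂,W₂))·(1 + Δ̄ + ‖𝒜‖), ρ((V₁,W₁),(V₂,W₂))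 := ‖P_{(V₁,W₁)} − P_{(V₂,W₂)}‖ is the operator norm (on ℝ^{m×n} with the Frobenius norm) of the difference of the orthogonal projections P_{(V,W)} : X ↦ P_V X P_W, and ‖𝒜‖ is the operator norm of 𝒜 from (ℝ^{m×n},‖·‖_F) to (ℝ^p,‖·‖₂). -/
open scoped BigOperators
open Matrix

noncomputable section

def opNorm {m n p : ℕ} (𝒜 : Matrix (Fin m) (Fin n) ℝ →ₗ[ℝ] (Fin p → ℝ)) : ℝ :=
  sInf {c : ℝ | 0 ≤ c ∧ ∀ X : Matrix (Fin m) (Fin n) ℝ, vNorm (𝒜 X) ≤ c * frobNorm X}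

/-- The fixed low-rank plus sparse subspace `Σ_{m,n}(V,W,T,μ)` (the incoherence conditions on
the subspaces `V`, `W` are imposed separately as hypotheses): matrices `L + S` with the
columns of `L` in `V`, the rows of `L` in `W`, and `S` supported in `T`. -/
def SigmaSet {m n : ℕ} (V : Submodule ℝ (EuclideanSpace ℝ (Fin m)))
    (W : Submodule ℝ (EuclideanSpace ℝ (Fin n))) (T : Set (Fin m × Fin n)) :
    Set (Matrix (Fin m) (Fin n) ℝ) :=
  {X | ∃ L S : Matrix (Fin m) (Fin n) ℝ, X = L + S ∧
      (∀ j : Fin n, WithLp.toLp 2 (fun i => L i j) ∈ V) ∧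
      (∀ i : Fin m, WithLp.toLp 2 (fun j => L i j) ∈ W) ∧
      (∀ i j, S i j ≠ 0 → (i, j) ∈ T)}

/-- The orthogonal projection `P_{(V,W)} : X ↦ P_V X P_W` on `ℝ^{m×n}`:
project each column of `X` onto `V` and each row onto `W`. -/
def projVW {m n : ℕ} (V : Submodule ℝ (EuclideanSpace ℝ (Fin m)))
    (W : Submodule ℝ (EuclideanSpace ℝ (Fin n))) (X : Matrix (Fin m) (Fin n) ℝ) :
    Matrix (Fin m) (Fin n) ℝ :=
  fun i j =>
    (Submodule.orthogonalProjectionOnto W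
      (WithLp.toLp 2 (fun j' => (Submodule.orthogonalProjectionOnto V
          (WithLp.toLp 2 (fun i' => X i' j') : EuclideanSpace ℝ (Fin m)) : EuclideanSpace ℝ (Fin m)) i)
        : EuclideanSpace ℝ (Fin n)) : EuclideanSpace ℝ (Fin n)) j

/-- The distance `ρ((V₁,W₁),(V₂,W₂)) = ‖P_{(V₁,W₁)} − P_{(V₂,W₂)}‖`, the operator norm
(with respect to the Frobenius norm on ℝ^{m×n}) of the difference of the projections. -/
def rhoDist {m n : ℕ} (V₁ : Submodule ℝ (EuclideanSpace ℝ (Fin m)))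
    (W₁ : Submodule ℝ (EuclideanSpace ℝ (Fin n)))
    (V₂ : Submodule ℝ (EuclideanSpace ℝ (Fin m)))
    (W₂ : Submodule ℝ (EuclideanSpace ℝ (Fin n))) : ℝ :=
  sInf {c : ℝ | 0 ≤ c ∧ ∀ X : Matrix (Fin m) (Fin n) ℝ,
    frobNorm (projVW V₁ W₁ X - projVW V₂ W₂ X) ≤ c * frobNorm X}

/-!
Write `Y = L + S ∈ Σ₂` and compare it with `X = P_{(V₁,W₁)} L + S ∈ Σ₁`. Since the columns of
`L` lie in `V₂` and its rows in `W₂`, `L i j = ⟨P_{V₂} eᵢ, L P_{W₂} fⱼ⟩`, so incoherence bounds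
every entry of `L` by `√(μr/m) √(μr/n) ‖L‖_F`. As `S` has at most `s` nonzero entries, this
gives `|⟨L, S⟩| ≤ γ ‖L‖_F ‖S‖_F` with `γ² = μ²r²s/(mn) < 1`, and expanding `‖L + S‖_F²` yields
`‖L‖_F ≤ τ ‖Y‖_F`. Hence `‖Y - X‖_F = ‖(P_{(V₁,W₁)} - P_{(V₂,W₂)}) L‖_F ≤ τρ ‖Y‖_F`, and the
RIP bounds for `X` pass to `Y` by the triangle inequality: `‖X‖_F` differs from `‖Y‖_F` by at
most `τρ ‖Y‖_F`, and `‖𝒜(Y - X)‖₂ ≤ ‖𝒜‖ τρ ‖Y‖_F`.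
-/

open scoped Matrix.Norms.Frobenius

theorem csInf_mem_setOf_le_mul {α : Type*} {f g : α → ℝ}
    (h : ∃ c, 0 ≤ c ∧ ∀ x, f x ≤ c * g x) :
    sInf {c | 0 ≤ c ∧ ∀ x, f x ≤ c * g x} ∈ {c | 0 ≤ c ∧ ∀ x, f x ≤ c * g x} := by
  refine IsClosed.csInf_mem ?_ h ⟨0, fun _ hc => hc.1⟩
  simp only [Set.ofPred_and, Set.ofPred_forall]
  exact isClosed_Ici.inter
    (isClosed_iInter fun x => isClosed_le continuous_const (continuous_id.mul continuous_const))

theorem norm_map_bounds_of_norm_sub_le {E F : Type*} [SeminormedAddCommGroup E]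
    [SeminormedAddCommGroup F] (f : E →+ F) {Δ K ε : ℝ} {X Y : E} (hΔ : 0 ≤ Δ)
    (hK : 0 ≤ K) (hf : ∀ z, ‖f z‖ ≤ K * ‖z‖) (hε : 0 ≤ ε) (hXY : ‖Y - X‖ ≤ ε * ‖Y‖)
    (hX : (1 - Δ) * ‖X‖ ≤ ‖f X‖ ∧ ‖f X‖ ≤ (1 + Δ) * ‖X‖) :
    (1 - (Δ + ε * (1 + Δ + K))) * ‖Y‖ ≤ ‖f Y‖ ∧
      ‖f Y‖ ≤ (1 + (Δ + ε * (1 + Δ + K))) * ‖Y‖ := by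
  have hfXY : ‖f Y - f X‖ ≤ K * (ε * ‖Y‖) := by
    rw [← map_sub]; exact (hf _).trans (by gcongr)
  have hY := abs_le.mp ((abs_norm_sub_norm_le Y X).trans hXY)
  have hfY := abs_le.mp ((abs_norm_sub_norm_le (f Y) (f X)).trans hfXY)
  have hεY : 0 ≤ ε * ‖Y‖ := by positivity
  constructor
  · rcases le_total Δ 1 with h | h <;> nlinarith
  · nlinarith

theorem le_rpow_neg_half_mul {c x y : ℝ} (hc : 0 < c) (hy : 0 ≤ y) (h : c * x ^ 2 ≤ y ^ 2) :
    x ≤ c ^ (-(1 / 2) : ℝ) * y := by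
  rw [Real.rpow_neg hc.le, ← Real.sqrt_eq_rpow, le_inv_mul_iff₀ (Real.sqrt_pos.2 hc)]
  exact (abs_le_of_sq_le_sq' (by rwa [mul_pow, Real.sq_sqrt hc.le]) hy).2

theorem mul_sq_div_lt_one_of_lt_sqrt_div {m n r s : ℕ} {μ : ℝ} (hμ0 : 0 ≤ μ)
    (hμ : μ < √((m : ℝ) * n) / ((r : ℝ) * √s)) :
    μ ^ 2 * (r : ℝ) ^ 2 * s / ((m : ℝ) * n) < 1 := by
  obtain ⟨hnum, hden⟩ := (div_pos_iff.mp (hμ0.trans_lt hμ)).resolve_right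
    fun h => (Real.sqrt_nonneg _).not_gt h.1
  have hmn : 0 < (m : ℝ) * n := Real.sqrt_pos.mp hnum
  have hsq := mul_self_lt_mul_self (by positivity) ((lt_div_iff₀ hden).mp hμ)
  rw [Real.mul_self_sqrt hmn.le] at hsq
  rw [div_lt_one hmn]
  linear_combination hsq - (μ * r) ^ 2 * Real.sq_sqrt (Nat.cast_nonneg (α := ℝ) s)

section

variable {ι κ : Type*} [Fintype ι] [Fintype κ]

theorem norm_toLp_mulVec_le (A : Matrix ι κ ℝ) (v : κ → ℝ) :
    ‖(WithLp.toLp 2 (A *ᵥ v) : EuclideanSpace ℝ ι)‖ ≤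
      ‖A‖ * ‖(WithLp.toLp 2 v : EuclideanSpace ℝ κ)‖ := by
  rw [← Matrix.frobenius_norm_replicateCol (ι := Unit), Matrix.replicateCol_mulVec,
    ← Matrix.frobenius_norm_replicateCol (ι := Unit) v]
  exact Matrix.frobenius_norm_mul _ _

theorem abs_dotProduct_mulVec_le (u : ι → ℝ) (A : Matrix ι κ ℝ) (v : κ → ℝ) :
    |u ⬝ᵥ (A *ᵥ v)| ≤ ‖(WithLp.toLp 2 u : EuclideanSpace ℝ ι)‖ * ‖A‖ *
      ‖(WithLp.toLp 2 v : EuclideanSpace ℝ κ)‖ := by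
  calc |u ⬝ᵥ (A *ᵥ v)|
      = |inner ℝ (WithLp.toLp 2 (A *ᵥ v) : EuclideanSpace ℝ ι) (WithLp.toLp 2 u)| := by
        rw [EuclideanSpace.inner_toLp_toLp]; simp
    _ ≤ ‖(WithLp.toLp 2 u : EuclideanSpace ℝ ι)‖ *
          ‖(WithLp.toLp 2 (A *ᵥ v) : EuclideanSpace ℝ ι)‖ := by
        rw [mul_comm]; exact abs_real_inner_le_norm _ _
    _ ≤ _ := by
        rw [mul_assoc]; gcongr; exact norm_toLp_mulVec_le A v

end

section ProjMatrix

variable {ι κ : Type*} [Fintype ι] [DecidableEq ι]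

def projMatrix (K : Submodule ℝ (EuclideanSpace ℝ ι)) : Matrix ι ι ℝ :=
  Matrix.toEuclideanLin.symm K.starProjection.toLinearMap

variable (K : Submodule ℝ (EuclideanSpace ℝ ι))

theorem starProjection_eq_mulVec (x : EuclideanSpace ℝ ι) :
    K.starProjection x = WithLp.toLp 2 (projMatrix K *ᵥ WithLp.ofLp x) := by
  change K.starProjection.toLinearMap x = _
  rw [← LinearEquiv.apply_symm_apply Matrix.toEuclideanLin K.starProjection.toLinearMap]
  rfl

theorem projMatrix_apply (i k : ι) :
    projMatrix K i k = K.starProjection (EuclideanSpace.single k 1) i := by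
  simp [starProjection_eq_mulVec]

theorem projMatrix_isSymm : (projMatrix K).IsSymm := by
  ext i k
  have h := K.starProjection_isSymmetric (EuclideanSpace.single k 1) (EuclideanSpace.single i 1)
  simp only [EuclideanSpace.inner_single_left, EuclideanSpace.inner_single_right] at h
  simpa [projMatrix_apply] using h.symm

theorem projMatrix_mul_col_mem (Z : Matrix ι κ ℝ) (j : κ) :
    WithLp.toLp 2 (fun i => (projMatrix K * Z) i j) ∈ K := by
  have : WithLp.toLp 2 (fun i => (projMatrix K * Z) i j) =
      K.starProjection (WithLp.toLp 2 (fun i => Z i j)) := by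
    rw [starProjection_eq_mulVec]; rfl
  rw [this]; exact K.starProjection_apply_mem _

theorem mul_projMatrix_row_mem (Z : Matrix κ ι ℝ) (i : κ) :
    WithLp.toLp 2 (fun j => (Z * projMatrix K) i j) ∈ K := by
  have : WithLp.toLp 2 (fun j => (Z * projMatrix K) i j) =
      K.starProjection (WithLp.toLp 2 (Z i)) := by
    ext j
    simp [starProjection_eq_mulVec, Matrix.mul_apply, Matrix.mulVec, dotProduct,
      (projMatrix_isSymm K).apply, mul_comm]
  rw [this]; exact K.starProjection_apply_mem _

theorem projMatrix_mul_of_mem {Z : Matrix ι κ ℝ}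
    (hZ : ∀ j, WithLp.toLp 2 (fun i => Z i j) ∈ K) : projMatrix K * Z = Z := by
  ext i j
  have h := congrArg (· i) (K.starProjection_eq_self_iff.mpr (hZ j))
  simpa [starProjection_eq_mulVec, Matrix.mulVec, dotProduct, Matrix.mul_apply] using h

theorem mul_projMatrix_of_mem {Z : Matrix κ ι ℝ}
    (hZ : ∀ i, WithLp.toLp 2 (fun j => Z i j) ∈ K) : Z * projMatrix K = Z := by
  ext i j
  have h := congrArg (· j) (K.starProjection_eq_self_iff.mpr (hZ i))
  simpa [starProjection_eq_mulVec, Matrix.mulVec, dotProduct, Matrix.mul_apply,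
    (projMatrix_isSymm K).apply, mul_comm] using h

end ProjMatrix

section

variable {ι κ : Type*} [Fintype ι] [DecidableEq ι] [Fintype κ] [DecidableEq κ]

theorem abs_apply_le_of_mem (V : Submodule ℝ (EuclideanSpace ℝ ι))
    (W : Submodule ℝ (EuclideanSpace ℝ κ)) {L : Matrix ι κ ℝ}
    (hcol : ∀ j, WithLp.toLp 2 (fun i => L i j) ∈ V)
    (hrow : ∀ i, WithLp.toLp 2 (fun j => L i j) ∈ W) (i : ι) (j : κ) :
    |L i j| ≤ ‖V.starProjection (EuclideanSpace.single i 1)‖ * ‖L‖ *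
      ‖W.starProjection (EuclideanSpace.single j 1)‖ := by
  have hL : L = projMatrix V * (L * projMatrix W) := by
    rw [mul_projMatrix_of_mem W hrow, projMatrix_mul_of_mem V hcol]
  have hentry : L i j = WithLp.ofLp (V.starProjection (EuclideanSpace.single i 1)) ⬝ᵥ
      (L *ᵥ WithLp.ofLp (W.starProjection (EuclideanSpace.single j 1))) := by
    conv_lhs => rw [hL]
    simp only [Matrix.mul_apply, Matrix.mulVec, dotProduct, ← projMatrix_apply,
      (projMatrix_isSymm V).apply]
  rw [hentry]
  exact abs_dotProduct_mulVec_le _ _ _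

end

section Frobenius

variable {m n p : ℕ}

theorem frobNorm_eq_norm (A : Matrix (Fin m) (Fin n) ℝ) : frobNorm A = ‖A‖ := by
  simp [frobNorm, frobSq, frobenius_norm_def, Real.sqrt_eq_rpow]

theorem vNorm_eq_norm (v : Fin p → ℝ) :
    vNorm v = ‖(WithLp.toLp 2 v : EuclideanSpace ℝ (Fin p))‖ := by
  simp [vNorm, vNormSq, EuclideanSpace.norm_eq]

theorem norm_sq_eq_frobSq (A : Matrix (Fin m) (Fin n) ℝ) : ‖A‖ ^ 2 = frobSq A := by
  rw [← frobNorm_eq_norm, frobNorm, Real.sq_sqrt (by unfold frobSq; positivity)]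

theorem norm_add_sq_eq (A B : Matrix (Fin m) (Fin n) ℝ) :
    ‖A + B‖ ^ 2 = ‖A‖ ^ 2 + 2 * mInner A B + ‖B‖ ^ 2 := by
  simp only [norm_sq_eq_frobSq, frobSq, mInner, Matrix.add_apply, add_sq, Finset.sum_add_distrib,
    Finset.mul_sum, mul_assoc]

theorem opNorm_spec (𝒜 : Matrix (Fin m) (Fin n) ℝ →ₗ[ℝ] (Fin p → ℝ)) :
    0 ≤ opNorm 𝒜 ∧
      ∀ X, ‖(WithLp.toLp 2 (𝒜 X) : EuclideanSpace ℝ (Fin p))‖ ≤ opNorm 𝒜 * ‖X‖ := by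
  obtain ⟨C, hC, hbound⟩ :=
    (((WithLp.linearEquiv 2 ℝ (Fin p → ℝ)).symm.toLinearMap ∘ₗ 𝒜).toContinuousLinearMap).bound
  obtain ⟨h0, h⟩ := csInf_mem_setOf_le_mul (f := fun X => vNorm (𝒜 X)) (g := frobNorm)
    ⟨C, hC.le, fun X => by rw [vNorm_eq_norm, frobNorm_eq_norm]; exact hbound X⟩
  exact ⟨h0, fun X => by rw [← vNorm_eq_norm, ← frobNorm_eq_norm]; exact h X⟩

theorem projVW_eq_mul (V : Submodule ℝ (EuclideanSpace ℝ (Fin m)))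
    (W : Submodule ℝ (EuclideanSpace ℝ (Fin n))) (X : Matrix (Fin m) (Fin n) ℝ) :
    projVW V W X = projMatrix V * X * projMatrix W := by
  ext i j
  simp only [projVW, Submodule.coe_orthogonalProjectionOnto_apply, starProjection_eq_mulVec,
    WithLp.ofLp_toLp]
  simp [Matrix.mulVec, dotProduct, Matrix.mul_apply, Finset.mul_sum, (projMatrix_isSymm W).apply,
    mul_comm, mul_left_comm]

theorem rhoDist_spec (V₁ V₂ : Submodule ℝ (EuclideanSpace ℝ (Fin m)))
    (W₁ W₂ : Submodule ℝ (EuclideanSpace ℝ (Fin n))) :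
    0 ≤ rhoDist V₁ W₁ V₂ W₂ ∧
      ∀ X, ‖projVW V₁ W₁ X - projVW V₂ W₂ X‖ ≤
        rhoDist V₁ W₁ V₂ W₂ * ‖X‖ := by
  have hmul (V W) (X : Matrix (Fin m) (Fin n) ℝ) :
      ‖projVW V W X‖ ≤ ‖projMatrix V‖ * ‖projMatrix W‖ * ‖X‖ := by
    rw [projVW_eq_mul]
    calc _ ≤ ‖projMatrix V * X‖ * ‖projMatrix W‖ := Matrix.frobenius_norm_mul _ _
      _ ≤ ‖projMatrix V‖ * ‖X‖ * ‖projMatrix W‖ := by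
          gcongr; exact Matrix.frobenius_norm_mul _ _
      _ = _ := by ring
  obtain ⟨h0, h⟩ := csInf_mem_setOf_le_mul
    (f := fun X => frobNorm (projVW V₁ W₁ X - projVW V₂ W₂ X)) (g := frobNorm)
    ⟨‖projMatrix V₁‖ * ‖projMatrix W₁‖ + ‖projMatrix V₂‖ * ‖projMatrix W₂‖,
      by positivity,
      fun X => by
      simp only [frobNorm_eq_norm]
      calc _ ≤ _ := norm_sub_le _ _
        _ ≤ _ := add_le_add (hmul V₁ W₁ X) (hmul V₂ W₂ X)
        _ = _ := by ring⟩
  exact ⟨h0, fun X => by rw [← frobNorm_eq_norm, ← frobNorm_eq_norm]; exact h X⟩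

theorem projVW_eq_self_of_mem {V : Submodule ℝ (EuclideanSpace ℝ (Fin m))}
    {W : Submodule ℝ (EuclideanSpace ℝ (Fin n))} {L : Matrix (Fin m) (Fin n) ℝ}
    (hcol : ∀ j, WithLp.toLp 2 (fun i => L i j) ∈ V)
    (hrow : ∀ i, WithLp.toLp 2 (fun j => L i j) ∈ W) :
    projVW V W L = L := by
  rw [projVW_eq_mul, projMatrix_mul_of_mem V hcol, mul_projMatrix_of_mem W hrow]

theorem projVW_add_mem_sigmaSet (V : Submodule ℝ (EuclideanSpace ℝ (Fin m)))
    (W : Submodule ℝ (EuclideanSpace ℝ (Fin n))) {T : Set (Fin m × Fin n)}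
    (L : Matrix (Fin m) (Fin n) ℝ) {S : Matrix (Fin m) (Fin n) ℝ}
    (hS : ∀ i j, S i j ≠ 0 → (i, j) ∈ T) :
    projVW V W L + S ∈ SigmaSet V W T := by
  refine ⟨projVW V W L, S, rfl, fun j => ?_, fun i => ?_, hS⟩
  · rw [projVW_eq_mul, Matrix.mul_assoc]; exact projMatrix_mul_col_mem V _ j
  · rw [projVW_eq_mul]; exact mul_projMatrix_row_mem W _ i

theorem abs_mInner_le_of_support {L S : Matrix (Fin m) (Fin n) ℝ} {T : Set (Fin m × Fin n)}
    {a : ℝ} (ha : 0 ≤ a) (hL : ∀ i j, |L i j| ≤ a) (hS : ∀ i j, S i j ≠ 0 → (i, j) ∈ T) :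
    |mInner L S| ≤ a * √(T.ncard : ℝ) * ‖S‖ := by
  set F := T.toFinite.toFinset
  have hsum : mInner L S = ∑ q ∈ F, L q.1 q.2 * S q.1 q.2 := by
    rw [mInner, ← Finset.sum_product', Finset.univ_product_univ]
    refine (Finset.sum_subset (Finset.subset_univ F) fun q _ hq => ?_).symm
    by_contra h
    exact hq ((Set.Finite.mem_toFinset _).mpr (hS q.1 q.2 (right_ne_zero_of_mul h)))
  have hl1 : ∑ q ∈ F, |S q.1 q.2| ≤ √(T.ncard : ℝ) * ‖S‖ := by
    have hsq : ∑ q ∈ F, |S q.1 q.2| ^ 2 ≤ ‖S‖ ^ 2 := by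
      rw [norm_sq_eq_frobSq, frobSq, ← Finset.sum_product', Finset.univ_product_univ]
      simp only [sq_abs]
      exact Finset.sum_le_sum_of_subset_of_nonneg (Finset.subset_univ F) fun _ _ _ => sq_nonneg _
    have hcs := sq_sum_le_card_mul_sum_sq (s := F) (f := fun q => |S q.1 q.2|)
    rw [← Set.ncard_eq_toFinset_card T] at hcs
    calc ∑ q ∈ F, |S q.1 q.2| ≤ √((T.ncard : ℝ) * ‖S‖ ^ 2) :=
          Real.le_sqrt_of_sq_le (hcs.trans (by gcongr))
      _ = √(T.ncard : ℝ) * ‖S‖ := by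
          rw [Real.sqrt_mul (Nat.cast_nonneg _), Real.sqrt_sq (norm_nonneg _)]
  calc |mInner L S| ≤ ∑ q ∈ F, |L q.1 q.2| * |S q.1 q.2| := by
        rw [hsum]; exact (Finset.abs_sum_le_sum_abs _ _).trans_eq (by simp only [abs_mul])
    _ ≤ ∑ q ∈ F, a * |S q.1 q.2| := by gcongr with q; exact hL q.1 q.2
    _ ≤ a * √(T.ncard : ℝ) * ‖S‖ := by rw [← Finset.mul_sum, mul_assoc]; gcongr

theorem one_sub_mul_norm_sq_le_norm_add_sq (V : Submodule ℝ (EuclideanSpace ℝ (Fin m)))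
    (W : Submodule ℝ (EuclideanSpace ℝ (Fin n))) {L S : Matrix (Fin m) (Fin n) ℝ}
    {T : Set (Fin m × Fin n)} {α β : ℝ} (hα : 0 ≤ α) (hβ : 0 ≤ β)
    (hV : ∀ i, ‖V.starProjection (EuclideanSpace.single i 1)‖ ≤ α)
    (hW : ∀ j, ‖W.starProjection (EuclideanSpace.single j 1)‖ ≤ β)
    (hcol : ∀ j, WithLp.toLp 2 (fun i => L i j) ∈ V)
    (hrow : ∀ i, WithLp.toLp 2 (fun j => L i j) ∈ W)
    (hS : ∀ i j, S i j ≠ 0 → (i, j) ∈ T) :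
    (1 - (α * β) ^ 2 * T.ncard) * ‖L‖ ^ 2 ≤ ‖L + S‖ ^ 2 := by
  have hentry (i j) : |L i j| ≤ α * β * ‖L‖ := by
    refine (abs_apply_le_of_mem V W hcol hrow i j).trans ?_
    calc _ ≤ α * ‖L‖ * β := by gcongr; exacts [hV i, hW j]
      _ = α * β * ‖L‖ := by ring
  have hinner := (abs_le.mp (abs_mInner_le_of_support (by positivity) hentry hS)).1
  have hγ : (α * β) ^ 2 * T.ncard = (α * β * √(T.ncard : ℝ)) ^ 2 := by
    rw [mul_pow _ √_, Real.sq_sqrt (Nat.cast_nonneg _)]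
  rw [norm_add_sq_eq, hγ]
  nlinarith [sq_nonneg (α * β * √(T.ncard : ℝ) * ‖L‖ - ‖S‖)]

theorem norm_le_rpow_mul_norm_add {r s : ℕ} {μ : ℝ} (hμ0 : 0 ≤ μ)
    (hβ : 0 < 1 - μ ^ 2 * (r : ℝ) ^ 2 * s / ((m : ℝ) * n))
    (V : Submodule ℝ (EuclideanSpace ℝ (Fin m)))
    (W : Submodule ℝ (EuclideanSpace ℝ (Fin n)))
    (hV : ∀ i, ‖V.starProjection (EuclideanSpace.single i 1)‖ ≤ √(μ * r / m))
    (hW : ∀ j, ‖W.starProjection (EuclideanSpace.single j 1)‖ ≤ √(μ * r / n))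
    {T : Set (Fin m × Fin n)} (hT : T.ncard ≤ s) {L S : Matrix (Fin m) (Fin n) ℝ}
    (hcol : ∀ j, WithLp.toLp 2 (fun i => L i j) ∈ V)
    (hrow : ∀ i, WithLp.toLp 2 (fun j => L i j) ∈ W)
    (hS : ∀ i j, S i j ≠ 0 → (i, j) ∈ T) :
    ‖L‖ ≤ (1 - μ ^ 2 * (r : ℝ) ^ 2 * s / ((m : ℝ) * n)) ^ (-(1 / 2) : ℝ) *
      ‖L + S‖ := by
  refine le_rpow_neg_half_mul hβ (norm_nonneg _) (le_trans ?_ (one_sub_mul_norm_sq_le_norm_add_sq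
    V W (Real.sqrt_nonneg _) (Real.sqrt_nonneg _) hV hW hcol hrow hS))
  have hcoh : (√(μ * r / m) * √(μ * r / n)) ^ 2 * T.ncard ≤
      μ ^ 2 * (r : ℝ) ^ 2 * s / ((m : ℝ) * n) := by
    rw [mul_pow, Real.sq_sqrt (by positivity), Real.sq_sqrt (by positivity)]
    calc μ * r / m * (μ * r / n) * T.ncard ≤ μ * r / m * (μ * r / n) * s := by gcongr
      _ = _ := by ring
  gcongr

end Frobenius

theorem rip_perturbation_general
    (m n p r s : ℕ) (μ : ℝ) (hμ1 : 1 ≤ μ)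
    (hμ : μ < Real.sqrt (m * n) / ((r : ℝ) * Real.sqrt s))
    (𝒜 : Matrix (Fin m) (Fin n) ℝ →ₗ[ℝ] (Fin p → ℝ))
    (V₁ V₂ : Submodule ℝ (EuclideanSpace ℝ (Fin m)))
    (W₁ W₂ : Submodule ℝ (EuclideanSpace ℝ (Fin n)))
    (hV₂inc : ∀ i : Fin m,
      ‖Submodule.orthogonalProjectionOnto V₂ (EuclideanSpace.single i 1)‖ ≤ Real.sqrt (μ * r / m))
    (hW₂inc : ∀ j : Fin n,
      ‖Submodule.orthogonalProjectionOnto W₂ (EuclideanSpace.single j 1)‖ ≤ Real.sqrt (μ * r / n))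
    (T : Set (Fin m × Fin n)) (hT : T.ncard ≤ s)
    (Δ : ℝ) (hΔ : 0 < Δ)
    (hRIP : ∀ X ∈ SigmaSet V₁ W₁ T,
      (1 - Δ) * frobNorm X ≤ vNorm (𝒜 X) ∧ vNorm (𝒜 X) ≤ (1 + Δ) * frobNorm X) :
    ∀ Y ∈ SigmaSet V₂ W₂ T,
      (1 - (Δ + (1 - μ ^ 2 * (r : ℝ) ^ 2 * s / ((m : ℝ) * n)) ^ (-(1/2) : ℝ) *
            rhoDist V₁ W₁ V₂ W₂ * (1 + Δ + opNorm 𝒜))) * frobNorm Y ≤ vNorm (𝒜 Y) ∧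
      vNorm (𝒜 Y) ≤
        (1 + (Δ + (1 - μ ^ 2 * (r : ℝ) ^ 2 * s / ((m : ℝ) * n)) ^ (-(1/2) : ℝ) *
            rhoDist V₁ W₁ V₂ W₂ * (1 + Δ + opNorm 𝒜))) * frobNorm Y := by
  rintro _ ⟨L, S, rfl, hcol, hrow, hS⟩
  have hμ0 : 0 ≤ μ := zero_le_one.trans hμ1
  have hβ := sub_pos.2 (mul_sq_div_lt_one_of_lt_sqrt_div hμ0 hμ)
  have hL := norm_le_rpow_mul_norm_add hμ0 hβ V₂ W₂ hV₂inc hW₂inc hT hcol hrow hS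
  obtain ⟨hρ0, hρ⟩ := rhoDist_spec V₁ V₂ W₁ W₂
  obtain ⟨hK0, hK⟩ := opNorm_spec 𝒜
  have hdist : ‖L + S - (projVW V₁ W₁ L + S)‖ ≤
      (1 - μ ^ 2 * (r : ℝ) ^ 2 * s / ((m : ℝ) * n)) ^ (-(1/2) : ℝ) *
        rhoDist V₁ W₁ V₂ W₂ * ‖L + S‖ := by
    calc ‖L + S - (projVW V₁ W₁ L + S)‖
        = ‖projVW V₁ W₁ L - projVW V₂ W₂ L‖ := by
          rw [projVW_eq_self_of_mem hcol hrow, ← norm_neg]; congr 1; abel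
      _ ≤ rhoDist V₁ W₁ V₂ W₂ * ‖L‖ := hρ L
      _ ≤ _ := by rw [mul_comm _ (rhoDist _ _ _ _), mul_assoc]; gcongr
  have hX := hRIP _ (projVW_add_mem_sigmaSet V₁ W₁ L hS)
  simp only [frobNorm_eq_norm, vNorm_eq_norm] at hX ⊢
  exact norm_map_bounds_of_norm_sub_le
    ((WithLp.linearEquiv 2 ℝ (Fin p → ℝ)).symm.toLinearMap ∘ₗ 𝒜).toAddMonoidHom
    hΔ.le hK0 hK (mul_nonneg (Real.rpow_nonneg hβ.le _) hρ0) hdist hX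

/-- variation of the RIC constant under a perturbation of `(V,W)`:
if the RIP holds on `Σ₁ = Σ_{m,n}(V₁,W₁,T,μ)` with constant `Δ̄`, it holds on
`Σ₂ = Σ_{m,n}(V₂,W₂,T,μ)` with constant
`Δ̄' = Δ̄ + τ·ρ((V₁,W₁),(V₂,W₂))·(1 + Δ̄ + ‖𝒜‖)`, `τ = (1 − μ²r²s/(mn))^{−1/2}`. -/
theorem rip_perturbation
    (m n p r s : ℕ) (hr : 1 ≤ r) (hs : 1 ≤ s) (μ : ℝ) (hμ1 : 1 ≤ μ)
    (hμ : μ < Real.sqrt (m * n) / ((r : ℝ) * Real.sqrt s))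
    (𝒜 : Matrix (Fin m) (Fin n) ℝ →ₗ[ℝ] (Fin p → ℝ))
    (V₁ V₂ : Submodule ℝ (EuclideanSpace ℝ (Fin m)))
    (W₁ W₂ : Submodule ℝ (EuclideanSpace ℝ (Fin n)))
    (hV₁dim : Module.finrank ℝ V₁ ≤ r) (hV₂dim : Module.finrank ℝ V₂ ≤ r)
    (hW₁dim : Module.finrank ℝ W₁ ≤ r) (hW₂dim : Module.finrank ℝ W₂ ≤ r)
    (hV₁inc : ∀ i : Fin m,
      ‖Submodule.orthogonalProjectionOnto V₁ (EuclideanSpace.single i 1)‖ ≤ Real.sqrt (μ * r / m))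
    (hV₂inc : ∀ i : Fin m,
      ‖Submodule.orthogonalProjectionOnto V₂ (EuclideanSpace.single i 1)‖ ≤ Real.sqrt (μ * r / m))
    (hW₁inc : ∀ j : Fin n,
      ‖Submodule.orthogonalProjectionOnto W₁ (EuclideanSpace.single j 1)‖ ≤ Real.sqrt (μ * r / n))
    (hW₂inc : ∀ j : Fin n,
      ‖Submodule.orthogonalProjectionOnto W₂ (EuclideanSpace.single j 1)‖ ≤ Real.sqrt (μ * r / n))
    (T : Set (Fin m × Fin n)) (hT : T.ncard ≤ s)
    (Δ : ℝ) (hΔ : 0 < Δ)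
    (hRIP : ∀ X ∈ SigmaSet V₁ W₁ T,
      (1 - Δ) * frobNorm X ≤ vNorm (𝒜 X) ∧ vNorm (𝒜 X) ≤ (1 + Δ) * frobNorm X) :
    ∀ Y ∈ SigmaSet V₂ W₂ T,
      (1 - (Δ + (1 - μ ^ 2 * (r : ℝ) ^ 2 * s / ((m : ℝ) * n)) ^ (-(1/2) : ℝ) *
            rhoDist V₁ W₁ V₂ W₂ * (1 + Δ + opNorm 𝒜))) * frobNorm Y ≤ vNorm (𝒜 Y) ∧
      vNorm (𝒜 Y) ≤
        (1 + (Δ + (1 - μ ^ 2 * (r : ℝ) ^ 2 * s / ((m : ℝ) * n)) ^ (-(1/2) : ℝ) *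
            rhoDist V₁ W₁ V₂ W₂ * (1 + Δ + opNorm 𝒜))) * frobNorm Y :=
  rip_perturbation_general m n p r s μ hμ1 hμ 𝒜 V₁ V₂ W₁ W₂ hV₂inc hW₂inc T hT Δ hΔ hRIP
end
end

section
/- Let A, B ∈ ℝ^{m×n} and suppose rank(A) ≤ r. Then there exist matrices B₁, B₂ ∈ ℝ^{m×n} such that: (1) B = B₁ + B₂; (2) rank(B₁) ≤ 2r; (3) A B₂ᵀ = 0 (the m×m zero matrix) and Aᵀ B₂ = 0 (the n×n zero matrix); and (4) ⟨B₁, B₂⟩ = 0, where ⟨·,·⟩ is the Frobenius (trace) inner product. -/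
open scoped BigOperators
open Matrix

noncomputable section

/-!
Let `P` and `Q` be the orthogonal projections onto the column and row spaces of `A`, and put
`B₂ = (1 - P) B (1 - Q)` and `B₁ = B - B₂ = P B + (1 - P) B Q`. Then
`rank B₁ ≤ rank P + rank Q = 2 rank A`; `A (1 - Q) = 0` and `Aᵀ (1 - P) = 0` kill `A B₂ᵀ`
and `Aᵀ B₂`; and since `1 - P` and `1 - Q` are symmetric idempotents,
`⟨B₁, B₂⟩ = ⟨(1 - P) B₁ (1 - Q), B⟩ = 0`.
-/

namespace Matrix

theorem rank_add_le {ι κ K : Type*} [Fintype κ] [Field K] (M N : Matrix ι κ K) :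
    (M + N).rank ≤ M.rank + N.rank := by
  have h : LinearMap.range (M + N).mulVecLin ≤
      LinearMap.range M.mulVecLin ⊔ LinearMap.range N.mulVecLin := by
    rw [mulVecLin_add]
    exact LinearMap.range_add_le _ _
  exact (Submodule.finrank_mono h).trans (Submodule.finrank_add_le_finrank_add_finrank _ _)

theorem exists_isStarProjection_mul_eq_self {ι κ 𝕜 : Type*} [Fintype ι] [Fintype κ]
    [DecidableEq ι] [RCLike 𝕜] (A : Matrix ι κ 𝕜) :
    ∃ P : Matrix ι ι 𝕜, IsStarProjection P ∧ P * A = A ∧ P.rank = A.rank := by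
  classical
  let W := LinearMap.range (toEuclideanLin A)
  let e := (toEuclideanCLM (n := ι) (𝕜 := 𝕜)).symm
  refine ⟨e W.starProjection, isStarProjection_starProjection.map e, ?_, ?_⟩
  · refine toLin'.injective (LinearMap.ext fun x => ?_)
    have hx : WithLp.toLp 2 (A *ᵥ x) ∈ W := ⟨WithLp.toLp 2 x, rfl⟩
    rw [toLin'_apply, toLin'_apply, ← mulVec_mulVec, ← ofLp_toEuclideanCLM,
      StarAlgEquiv.apply_symm_apply, Submodule.starProjection_eq_self_iff.mpr hx]
  · let bι := (EuclideanSpace.basisFun ι 𝕜).toBasis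
    rw [rank_eq_finrank_range_toLin _ bι bι,
      rank_eq_finrank_range_toLin _ bι (EuclideanSpace.basisFun κ 𝕜).toBasis,
      ← toEuclideanLin_eq_toLin_orthonormal, ← toEuclideanLin_eq_toLin_orthonormal,
      ← coe_toEuclideanCLM_eq_toEuclideanLin, StarAlgEquiv.apply_symm_apply]
    exact congrArg (fun U : Submodule 𝕜 _ => Module.finrank 𝕜 U) W.range_starProjection

end Matrix

theorem IsStarProjection.transpose_eq {ι : Type*} [Fintype ι] {P : Matrix ι ι ℝ}
    (hP : IsStarProjection P) : Pᵀ = P := by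
  simpa [star_eq_conjTranspose, conjTranspose_eq_transpose_of_trivial] using
    hP.isSelfAdjoint.star_eq

theorem mInner_eq_trace {m n : ℕ} (X Y : Matrix (Fin m) (Fin n) ℝ) :
    mInner X Y = (Xᵀ * Y).trace := by
  simp only [mInner, trace, diag, mul_apply, transpose_apply]
  exact Finset.sum_comm

theorem mInner_zero_left {m n : ℕ} (Y : Matrix (Fin m) (Fin n) ℝ) : mInner 0 Y = 0 := by
  simp [mInner]

theorem mInner_mul_mul_right {m n : ℕ} (X Y : Matrix (Fin m) (Fin n) ℝ)
    (P : Matrix (Fin m) (Fin m) ℝ) (Q : Matrix (Fin n) (Fin n) ℝ) :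
    mInner X (P * Y * Q) = mInner (Pᵀ * X * Qᵀ) Y := by
  rw [mInner_eq_trace, mInner_eq_trace, ← Matrix.mul_assoc, ← Matrix.mul_assoc, trace_mul_comm,
    transpose_mul, transpose_mul, transpose_transpose, transpose_transpose]
  simp only [Matrix.mul_assoc]

theorem mInner_sub_mul_mul_self {m n : ℕ} (B : Matrix (Fin m) (Fin n) ℝ)
    {E : Matrix (Fin m) (Fin m) ℝ} {F : Matrix (Fin n) (Fin n) ℝ}
    (hE : IsStarProjection E) (hF : IsStarProjection F) :
    mInner (B - E * B * F) (E * B * F) = 0 := by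
  have h : E * (B - E * B * F) * F = 0 := by
    simp only [Matrix.mul_sub, Matrix.sub_mul, Matrix.mul_assoc, hF.isIdempotentElem.eq]
    rw [← Matrix.mul_assoc E E, hE.isIdempotentElem.eq, sub_self]
  rw [mInner_mul_mul_right, hE.transpose_eq, hF.transpose_eq, h, mInner_zero_left]

/-- splitting `B` relative to a rank-`r` matrix `A` into a part of rank at
most `2r` and a part orthogonal to `A` in both row and column spaces. -/
theorem split_relative_to_lowrank
    (m n r : ℕ) (A B : Matrix (Fin m) (Fin n) ℝ) (hA : A.rank ≤ r) :
    ∃ B₁ B₂ : Matrix (Fin m) (Fin n) ℝ,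
      B = B₁ + B₂ ∧
      B₁.rank ≤ 2 * r ∧
      A * B₂ᵀ = 0 ∧ Aᵀ * B₂ = 0 ∧
      mInner B₁ B₂ = 0 := by
  obtain ⟨P, hP, hPA, hPr⟩ := A.exists_isStarProjection_mul_eq_self
  obtain ⟨Q, hQ, hQA, hQr⟩ := Aᵀ.exists_isStarProjection_mul_eq_self
  have hAP : Aᵀ * P = Aᵀ := by simpa [hP.transpose_eq] using congrArg transpose hPA
  have hAQ : A * Q = A := by simpa [hQ.transpose_eq] using congrArg transpose hQA
  set B₂ := (1 - P) * B * (1 - Q)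
  refine ⟨B - B₂, B₂, (sub_add_cancel B B₂).symm, ?_, ?_, ?_,
    mInner_sub_mul_mul_self B hP.one_sub hQ.one_sub⟩
  · have hB₁ : B - B₂ = P * B + (1 - P) * B * Q := by
      simp only [B₂, Matrix.mul_sub, Matrix.sub_mul, Matrix.mul_one, Matrix.one_mul]; abel
    calc (B - B₂).rank ≤ (P * B).rank + ((1 - P) * B * Q).rank := hB₁ ▸ rank_add_le _ _
      _ ≤ P.rank + Q.rank := add_le_add (rank_mul_le_left _ _) (rank_mul_le_right _ _)
      _ ≤ 2 * r := by rw [hPr, hQr, rank_transpose]; omega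
  · simp only [B₂, transpose_mul, transpose_sub, transpose_one, hP.transpose_eq, hQ.transpose_eq,
      ← Matrix.mul_assoc, Matrix.mul_sub, Matrix.mul_one, hAQ, sub_self]
  · simp only [B₂, ← Matrix.mul_assoc, Matrix.mul_sub, Matrix.mul_one, hAP, sub_self,
      Matrix.zero_mul]
end
end

section
/- Let A and B be real matrices of the same dimensions. If A Bᵀ = 0 and Aᵀ B = 0, then ‖A + B‖_* = ‖A‖_* + ‖B‖_*, where ‖·‖_* denotes the nuclear (Schatten-1) norm, i.e. the sum of the singular values. -/
/-! If `AᵀB = 0` the Gram matrix of `A + B` splits as `AᵀA + BᵀB`, and `ABᵀ = 0` makes these two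
positive semidefinite summands annihilate each other. The square roots of positive matrices with
`PQ = 0` still satisfy `√P √Q = 0`, so `√P + √Q` is a positive square root of `P + Q`; taking
traces gives additivity of the nuclear norm. -/

open Matrix

noncomputable section

/-- The nuclear (Schatten-1) norm of a real matrix: the trace of `(MᴴM)^{1/2}`, i.e. the sum
of the singular values of `M`. -/
def nuclearNorm {m n : ℕ} (M : Matrix (Fin m) (Fin n) ℝ) : ℝ :=
  (let hA := Matrix.posSemidef_conjTranspose_mul_self M
   (hA.1.eigenvectorUnitary.1 * diagonal ((RCLike.ofReal : ℝ → ℝ) ∘ (√·) ∘ hA.1.eigenvalues) *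
      (star hA.1.eigenvectorUnitary : Matrix (Fin n) (Fin n) ℝ))).trace

open scoped MatrixOrder ComplexOrder

namespace Matrix

variable {n 𝕜 : Type*} [Fintype n] [DecidableEq n] [RCLike 𝕜]

lemma sqrt_mul_eq_zero_of_mul_eq_zero {P Q : Matrix n n 𝕜} (hP : 0 ≤ P) (hPQ : P * Q = 0) :
    CFC.sqrt P * Q = 0 := by
  rw [← conjTranspose_mul_self_eq_zero]
  calc (CFC.sqrt P * Q)ᴴ * (CFC.sqrt P * Q) = Qᴴ * (CFC.sqrt P * CFC.sqrt P * Q) := by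
        rw [conjTranspose_mul, (CFC.sqrt_nonneg P).posSemidef.isHermitian.eq]
        simp only [Matrix.mul_assoc]
    _ = 0 := by rw [CFC.sqrt_mul_sqrt_self P hP, hPQ, Matrix.mul_zero]

lemma sqrt_mul_sqrt_eq_zero_of_mul_eq_zero {P Q : Matrix n n 𝕜} (hP : 0 ≤ P) (hQ : 0 ≤ Q)
    (hQP : Q * P = 0) : CFC.sqrt P * CFC.sqrt Q = 0 := by
  have hsqrtQ : CFC.sqrt Q * P = 0 := sqrt_mul_eq_zero_of_mul_eq_zero hQ hQP
  apply sqrt_mul_eq_zero_of_mul_eq_zero hP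
  simpa [hP.posSemidef.isHermitian.eq, (CFC.sqrt_nonneg Q).posSemidef.isHermitian.eq]
    using congrArg conjTranspose hsqrtQ

lemma sqrt_add_of_mul_eq_zero {P Q : Matrix n n 𝕜} (hP : 0 ≤ P) (hQ : 0 ≤ Q)
    (hPQ : P * Q = 0) : CFC.sqrt (P + Q) = CFC.sqrt P + CFC.sqrt Q := by
  have hQP : Q * P = 0 := by
    simpa [hP.posSemidef.isHermitian.eq, hQ.posSemidef.isHermitian.eq]
      using congrArg conjTranspose hPQ
  rw [CFC.sqrt_eq_iff _ _ (add_nonneg hP hQ)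
    (add_nonneg (CFC.sqrt_nonneg P) (CFC.sqrt_nonneg Q)), add_mul, mul_add, mul_add,
    sqrt_mul_sqrt_eq_zero_of_mul_eq_zero hP hQ hQP, sqrt_mul_sqrt_eq_zero_of_mul_eq_zero hQ hP hPQ,
    CFC.sqrt_mul_sqrt_self P, CFC.sqrt_mul_sqrt_self Q, add_zero, zero_add]

end Matrix

lemma nuclearNorm_eq_trace_sqrt {m n : ℕ} (M : Matrix (Fin m) (Fin n) ℝ) :
    nuclearNorm M = (CFC.sqrt (Mᴴ * M)).trace := by
  have hM := posSemidef_conjTranspose_mul_self M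
  rw [CFC.sqrt_eq_cfc, cfc_nnreal_eq_real _ (Mᴴ * M), hM.1.cfc_eq, nuclearNorm]
  simp only [IsHermitian.cfc]
  congr 4
  funext i
  simp only [Function.comp_apply, Real.coe_sqrt, Real.coe_toNNReal', RCLike.ofReal_real_eq_id,
    id_eq]
  exact congrArg _ (max_eq_left (hM.eigenvalues_nonneg i)).symm

/-- if `A Bᵀ = 0` and `Aᵀ B = 0` then the nuclear norm is additive:
`‖A + B‖_* = ‖A‖_* + ‖B‖_*`. -/
theorem nuclearNorm_add_of_orthogonal
    (m n : ℕ) (A B : Matrix (Fin m) (Fin n) ℝ)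
    (h₁ : A * Bᵀ = 0) (h₂ : Aᵀ * B = 0) :
    nuclearNorm (A + B) = nuclearNorm A + nuclearNorm B := by
  rw [← conjTranspose_eq_transpose_of_trivial] at h₁ h₂
  have hBA : Bᴴ * A = 0 := by simpa using congrArg conjTranspose h₂
  have hgram : (A + B)ᴴ * (A + B) = Aᴴ * A + Bᴴ * B := by
    rw [conjTranspose_add, Matrix.add_mul, Matrix.mul_add, Matrix.mul_add, h₂, hBA]
    abel
  have horth : (Aᴴ * A) * (Bᴴ * B) = 0 := by
    rw [Matrix.mul_assoc, ← Matrix.mul_assoc A, h₁, Matrix.zero_mul, Matrix.mul_zero]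
  rw [nuclearNorm_eq_trace_sqrt, hgram, sqrt_add_of_mul_eq_zero
    (posSemidef_conjTranspose_mul_self A).nonneg (posSemidef_conjTranspose_mul_self B).nonneg
    horth, trace_add, nuclearNorm_eq_trace_sqrt, nuclearNorm_eq_trace_sqrt]
end
end
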